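/- arXiv:2301.07406 — 4 statements merged into one kernel-verified Lean document; each statement's English description precedes it below -/
import Mathlib

section
/- Let φ : [0,∞) → [0,∞) be increasing with left inverse φ⁻¹(s) := inf{t ≥ 0 : φ(t) ≥ s}. If φ satisfies (Inc)_1 on (0,∞) (t ↦ φ(t)/t increasing), then φ⁻¹ is subadditive up to a factor 2: φ⁻¹(s+t) ≤ 2(φ⁻¹(s) + φ⁻¹(t)) for all s,t ≥ 0. -/
/-- If `φ : [0,∞) → [0,∞)` is increasing, vanishes at `0`, is coercive, and satisfies
`(Inc)₁` (`t ↦ φ t / t` increasing on `(0,∞)`), then its left inverse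
`φ⁻¹ s = inf {t ≥ 0 : φ t ≥ s}` is subadditive up to a factor `2`:
`φ⁻¹(s+t) ≤ 2 (φ⁻¹ s + φ⁻¹ t)` for all `s, t ≥ 0`. -/
theorem stmt_1 (φ : ℝ → ℝ)
    (hmono : ∀ s t : ℝ, 0 ≤ s → s ≤ t → φ s ≤ φ t)
    (hnonneg : ∀ t : ℝ, 0 ≤ t → 0 ≤ φ t)
    (h0 : φ 0 = 0)
    (hcoer : Filter.Tendsto φ Filter.atTop Filter.atTop)
    (hinc : ∀ s t : ℝ, 0 < s → s ≤ t → φ s / s ≤ φ t / t) :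
    ∀ s t : ℝ, 0 ≤ s → 0 ≤ t →
      sInf {u : ℝ | 0 ≤ u ∧ s + t ≤ φ u} ≤
        2 * (sInf {u : ℝ | 0 ≤ u ∧ s ≤ φ u} + sInf {u : ℝ | 0 ≤ u ∧ t ≤ φ u}) := by
  intro s t hs ht
  -- nonemptiness of the sets
  have hne : ∀ r : ℝ, {u : ℝ | 0 ≤ u ∧ r ≤ φ u}.Nonempty := by
    intro r
    obtain ⟨u, hu⟩ := (Filter.tendsto_atTop.1 hcoer r).exists_forall_of_atTop
    exact ⟨max u 0, le_max_right _ _, hu _ (le_max_left _ _)⟩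
  have hbdd : ∀ r : ℝ, BddBelow {u : ℝ | 0 ≤ u ∧ r ≤ φ u} :=
    fun r => ⟨0, fun u hu => hu.1⟩
  refine le_of_forall_pos_le_add fun ε hε => ?_
  obtain ⟨u, ⟨hu0, hus⟩, hu⟩ := Real.lt_sInf_add_pos (hne s) (by positivity :
    (0:ℝ) < ε/4)
  obtain ⟨v, ⟨hv0, hvt⟩, hv⟩ := Real.lt_sInf_add_pos (hne t) (by positivity :
    (0:ℝ) < ε/4)
  have hmem : 2 * (u + v) ∈ {w : ℝ | 0 ≤ w ∧ s + t ≤ φ w} := by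
    constructor
    · positivity
    · rcases eq_or_lt_of_le (by positivity : (0:ℝ) ≤ u + v) with h | h
      · have hu0' : u = 0 := by linarith
        have hv0' : v = 0 := by linarith
        have : s ≤ 0 := by rw [hu0', h0] at hus; exact hus
        have : t ≤ 0 := by rw [hv0', h0] at hvt; exact hvt
        have : φ (2 * (u + v)) = 0 := by rw [← h]; simpa using h0
        linarith
      · have h2 : φ (u + v) / (u + v) ≤ φ (2 * (u + v)) / (2 * (u + v)) :=
          hinc _ _ h (by linarith)
        have h3 : 2 * φ (u + v) ≤ φ (2 * (u + v)) := by
          rw [div_le_div_iff₀ h (by linarith)] at h2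
          nlinarith
        have h4 : φ u ≤ φ (u + v) := hmono _ _ hu0 (by linarith)
        have h5 : φ v ≤ φ (u + v) := hmono _ _ hv0 (by linarith)
        linarith
  calc sInf {w : ℝ | 0 ≤ w ∧ s + t ≤ φ w} ≤ 2 * (u + v) := csInf_le (hbdd _) hmem
    _ ≤ 2 * (sInf {u : ℝ | 0 ≤ u ∧ s ≤ φ u} + sInf {u : ℝ | 0 ≤ u ∧ t ≤ φ u}) + ε := by
        linarith
end

section
/- Let φ : [0,∞) → [0,∞] be a weak Φ-function (increasing, φ(0)=0=lim_{t→0⁺}φ(t), lim_{t→∞}φ(t)=∞, and t↦φ(t)/t almost increasing). Then φ satisfies the doubling condition Δ₂ (there exists K ≥ 2 with φ(2t) ≤ K φ(t) for all t ≥ 0) if and only if φ satisfies (aDec)_q for some q < ∞ (t ↦ φ(t)/t^q is almost decreasing). -/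
open scoped NNReal ENNReal

/-!
Iterating `φ(2t) ≤ 2^q φ(t)` gives `φ(2ⁿ s) ≤ (2ⁿ)^q φ(s)`; choosing `n` with
`t ≤ 2ⁿ s ≤ 2t` and using monotonicity yields `(aDec)_q` with `q = log₂ K`.
Conversely, `(aDec)_q` applied to the pair `t ≤ 2t` is `Δ₂` with constant `a 2^q`.
-/

theorem exists_pow_two_mul_mem_Icc {R : Type*} [Semifield R] [LinearOrder R]
    [IsStrictOrderedRing R] [Archimedean R] [ExistsAddOfLE R] {s t : R}
    (hs : 0 < s) (hst : s ≤ t) : ∃ n : ℕ, 2 ^ n * s ∈ Set.Icc t (2 * t) := by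
  obtain ⟨n, hle, hlt⟩ := exists_nat_pow_near ((one_le_div hs).2 hst) one_lt_two
  refine ⟨n + 1, ((div_lt_iff₀ hs).1 hlt).le, ?_⟩
  rw [pow_succ', mul_assoc]
  exact mul_le_mul_of_nonneg_left ((le_div_iff₀ hs).1 hle) zero_le_two

theorem le_pow_mul_of_doubling {φ : ℝ≥0 → ℝ≥0∞} {K : ℝ≥0∞}
    (hφ : ∀ t, φ (2 * t) ≤ K * φ t) (n : ℕ) (t : ℝ≥0) : φ (2 ^ n * t) ≤ K ^ n * φ t := by
  induction n with
  | zero => simp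
  | succ n ih =>
    calc φ (2 ^ (n + 1) * t) = φ (2 * (2 ^ n * t)) := by rw [pow_succ', mul_assoc]
      _ ≤ K * (K ^ n * φ t) := (hφ _).trans (mul_le_mul_right ih K)
      _ = K ^ (n + 1) * φ t := by rw [pow_succ', mul_assoc]

theorem div_rpow_le_of_doubling {φ : ℝ≥0 → ℝ≥0∞} (hmono : Monotone φ) {q : ℝ} (hq : 0 ≤ q)
    (hφ : ∀ t, φ (2 * t) ≤ 2 ^ q * φ t) {s t : ℝ≥0} (hs : 0 < s) (hst : s ≤ t) :
    φ t / (t : ℝ≥0∞) ^ q ≤ 2 ^ q * (φ s / (s : ℝ≥0∞) ^ q) := by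
  obtain ⟨n, ht_le, hle_two_t⟩ := exists_pow_two_mul_mem_Icc hs hst
  have hs0 : (s : ℝ≥0∞) ≠ 0 := ENNReal.coe_ne_zero.2 hs.ne'
  have hpow : ((2 : ℝ≥0∞) ^ q) ^ n = ((2 : ℝ≥0∞) ^ n) ^ q := by
    rw [← ENNReal.rpow_natCast, ← ENNReal.rpow_natCast, ← ENNReal.rpow_mul,
      ← ENNReal.rpow_mul, mul_comm]
  have hratio : (2 : ℝ≥0∞) ^ n ≤ 2 * t / s := by
    rw [ENNReal.le_div_iff_mul_le (Or.inl hs0) (Or.inl ENNReal.coe_ne_top)]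
    exact_mod_cast hle_two_t
  apply ENNReal.div_le_of_le_mul
  calc φ t ≤ φ (2 ^ n * s) := hmono ht_le
    _ ≤ ((2 : ℝ≥0∞) ^ n) ^ q * φ s := hpow ▸ le_pow_mul_of_doubling hφ n s
    _ ≤ (2 * t / s) ^ q * φ s := by gcongr
    _ = 2 ^ q * (φ s / (s : ℝ≥0∞) ^ q) * (t : ℝ≥0∞) ^ q := by
      rw [ENNReal.div_rpow_of_nonneg _ _ hq, ENNReal.mul_rpow_of_nonneg _ _ hq]
      simp only [div_eq_mul_inv]
      ring

theorem doubling_of_div_rpow_le {φ : ℝ≥0 → ℝ≥0∞} {q : ℝ} (hq : 0 ≤ q) {a : ℝ≥0∞} (ha : 1 ≤ a)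
    (hφ : ∀ s t : ℝ≥0, 0 < s → s ≤ t → φ t / (t : ℝ≥0∞) ^ q ≤ a * (φ s / (s : ℝ≥0∞) ^ q))
    (t : ℝ≥0) : φ (2 * t) ≤ a * 2 ^ q * φ t := by
  rcases eq_zero_or_pos t with rfl | ht
  · have h2q : 1 ≤ (2 : ℝ≥0∞) ^ q := ENNReal.one_rpow q ▸ ENNReal.rpow_le_rpow one_le_two hq
    rw [mul_zero]
    exact le_mul_of_one_le_left' (one_le_mul ha h2q)
  have htq0 : (t : ℝ≥0∞) ^ q ≠ 0 := by simp [ht.ne']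
  have htq_top : (t : ℝ≥0∞) ^ q ≠ ∞ := ENNReal.rpow_ne_top_of_nonneg hq ENNReal.coe_ne_top
  have h2t : ((2 * t : ℝ≥0) : ℝ≥0∞) ^ q = 2 ^ q * (t : ℝ≥0∞) ^ q := by
    rw [ENNReal.coe_mul, ENNReal.mul_rpow_of_nonneg _ _ hq, ENNReal.coe_ofNat]
  have h2t0 : ((2 * t : ℝ≥0) : ℝ≥0∞) ^ q ≠ 0 := by
    rw [h2t]
    exact mul_ne_zero (by simp) htq0
  have h2t_top : ((2 * t : ℝ≥0) : ℝ≥0∞) ^ q ≠ ∞ :=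
    ENNReal.rpow_ne_top_of_nonneg hq ENNReal.coe_ne_top
  calc φ (2 * t) = φ (2 * t) / ((2 * t : ℝ≥0) : ℝ≥0∞) ^ q * ((2 * t : ℝ≥0) : ℝ≥0∞) ^ q :=
        (ENNReal.div_mul_cancel h2t0 h2t_top).symm
    _ ≤ a * (φ t / (t : ℝ≥0∞) ^ q) * (2 ^ q * (t : ℝ≥0∞) ^ q) := by
      rw [← h2t]
      gcongr
      exact hφ t (2 * t) ht (le_mul_of_one_le_left t.2 one_le_two)
    _ = a * 2 ^ q * (φ t / (t : ℝ≥0∞) ^ q * (t : ℝ≥0∞) ^ q) := by ring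
    _ = a * 2 ^ q * φ t := by rw [ENNReal.div_mul_cancel htq0 htq_top]

theorem stmt_4_general (φ : ℝ≥0 → ℝ≥0∞)
    (hmono : Monotone φ) :
    (∃ K : ℝ≥0, 2 ≤ K ∧ ∀ t : ℝ≥0, φ (2 * t) ≤ K * φ t) ↔
      (∃ q : ℝ, 0 < q ∧ ∃ a : ℝ≥0, 1 ≤ a ∧ ∀ s t : ℝ≥0, 0 < s → s ≤ t →
        φ t / (t : ℝ≥0∞) ^ q ≤ a * (φ s / (s : ℝ≥0∞) ^ q)) := by
  constructor
  · rintro ⟨K, hK2, hK⟩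
    have hK_pos : 0 < K := zero_lt_two.trans_le hK2
    have hq : 1 ≤ Real.logb 2 K := by
      rw [Real.le_logb_iff_rpow_le one_lt_two (by exact_mod_cast hK_pos), Real.rpow_one]
      exact_mod_cast hK2
    have hK_nn : (2 : ℝ≥0) ^ Real.logb 2 K = K := by
      rw [← NNReal.coe_inj, NNReal.coe_rpow, NNReal.coe_ofNat,
        Real.rpow_logb two_pos (by norm_num) (by exact_mod_cast hK_pos)]
    have hK_eq : (K : ℝ≥0∞) = 2 ^ Real.logb 2 K := by
      rw [← ENNReal.coe_ofNat, ← ENNReal.coe_rpow_of_nonneg _ (zero_le_one.trans hq), hK_nn]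
    refine ⟨Real.logb 2 K, zero_lt_one.trans_le hq, K, one_le_two.trans hK2, fun s t hs hst => ?_⟩
    rw [hK_eq]
    exact div_rpow_le_of_doubling hmono (zero_le_one.trans hq) (hK_eq ▸ hK) hs hst
  · rintro ⟨q, hq, a, ha, hφ⟩
    refine ⟨max 2 (a * 2 ^ q), le_max_left _ _, fun t => ?_⟩
    have hcoe : ((a * 2 ^ q : ℝ≥0) : ℝ≥0∞) = a * 2 ^ q := by
      rw [ENNReal.coe_mul, ENNReal.coe_rpow_of_nonneg _ hq.le, ENNReal.coe_ofNat]
    calc φ (2 * t) ≤ ((a * 2 ^ q : ℝ≥0) : ℝ≥0∞) * φ t :=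
          hcoe ▸ doubling_of_div_rpow_le hq.le (by exact_mod_cast ha) hφ t
      _ ≤ ((max 2 (a * 2 ^ q) : ℝ≥0) : ℝ≥0∞) * φ t := by gcongr; exact le_max_right _ _

/-- A weak `Φ`-function `φ` satisfies the doubling condition `Δ₂` if and only if it
satisfies `(aDec)_q` for some `q < ∞`. -/
theorem stmt_4 (φ : ℝ≥0 → ℝ≥0∞)
    (hmono : Monotone φ) (h0 : φ 0 = 0)
    (hlim0 : Filter.Tendsto φ (nhdsWithin 0 (Set.Ioi 0)) (nhds 0))
    (hcoer : Filter.Tendsto φ Filter.atTop Filter.atTop)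
    (haInc : ∃ a : ℝ≥0, 1 ≤ a ∧ ∀ s t : ℝ≥0, 0 < s → s ≤ t →
      φ s / (s : ℝ≥0∞) ≤ a * (φ t / (t : ℝ≥0∞))) :
    (∃ K : ℝ≥0, 2 ≤ K ∧ ∀ t : ℝ≥0, φ (2 * t) ≤ K * φ t) ↔
      (∃ q : ℝ, 0 < q ∧ ∃ a : ℝ≥0, 1 ≤ a ∧ ∀ s t : ℝ≥0, 0 < s → s ≤ t →
        φ t / (t : ℝ≥0∞) ^ q ≤ a * (φ s / (s : ℝ≥0∞) ^ q)) :=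
  stmt_4_general φ hmono
end

section
/- Let φ be a convex Φ-function (left-continuous, convex, increasing, φ(0)=0, limit ∞ at ∞). Then φ is doubling (φ(2t) ≤ Kφ(t) for all t, some K ≥ 2) if and only if φ satisfies (Dec)_q for some q < ∞, i.e. t ↦ φ(t)/t^q is decreasing on (0,∞). -/
private lemma step_lemma (φ : ℝ → ℝ) (K : ℝ) (hK : 2 ≤ K)
    (hconv : ConvexOn ℝ (Set.Ici 0) φ)
    (hmono : ∀ s t : ℝ, 0 ≤ s → s ≤ t → φ s ≤ φ t)
    (h0 : φ 0 = 0)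
    (hdbl : ∀ t : ℝ, 0 ≤ t → φ (2 * t) ≤ K * φ t) :
    ∀ s l : ℝ, 0 < s → 1 ≤ l → l ≤ 2 → φ (l * s) ≤ l ^ (K - 1) * φ s := by
  intro s l hs hl1 hl2
  have hφs : 0 ≤ φ s := h0 ▸ hmono 0 s le_rfl hs.le
  have hcomb : φ (l * s) ≤ (1 + (l - 1) * (K - 1)) * φ s := by
    have h1 : (0:ℝ) ≤ 2 - l := by linarith
    have h2 : (0:ℝ) ≤ l - 1 := by linarith
    have hsum : (2 - l) + (l - 1) = 1 := by ring
    have := hconv.2 (show s ∈ Set.Ici (0:ℝ) from hs.le)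
      (show 2 * s ∈ Set.Ici (0:ℝ) by simp; positivity) h1 h2 hsum
    have heq : (2 - l) • s + (l - 1) • (2 * s) = l * s := by
      simp [smul_eq_mul]; ring
    rw [heq] at this
    calc φ (l * s) ≤ (2 - l) * φ s + (l - 1) * φ (2 * s) := by
            simpa [smul_eq_mul] using this
      _ ≤ (2 - l) * φ s + (l - 1) * (K * φ s) := by
            have := hdbl s hs.le
            nlinarith
      _ = (1 + (l - 1) * (K - 1)) * φ s := by ring
  have hbern : 1 + (K - 1) * (l - 1) ≤ l ^ (K - 1) := by
    have := one_add_mul_self_le_rpow_one_add (s := l - 1) (by linarith) (p := K - 1) (by linarith)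
    simpa using this
  calc φ (l * s) ≤ (1 + (l - 1) * (K - 1)) * φ s := hcomb
    _ ≤ l ^ (K - 1) * φ s := by
        apply mul_le_mul_of_nonneg_right _ hφs
        linarith [hbern]

/-- A convex `Φ`-function `φ` (left-continuous, convex, increasing, `φ 0 = 0`,
coercive) is doubling (`Δ₂`) if and only if it satisfies `(Dec)_q` for some `q < ∞`,
i.e. `t ↦ φ t / t ^ q` is decreasing on `(0,∞)`. -/
theorem stmt_5 (φ : ℝ → ℝ)
    (hconv : ConvexOn ℝ (Set.Ici 0) φ)
    (hmono : ∀ s t : ℝ, 0 ≤ s → s ≤ t → φ s ≤ φ t)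
    (h0 : φ 0 = 0)
    (hleft : ∀ t : ℝ, 0 < t →
      Filter.Tendsto φ (nhdsWithin t (Set.Iio t)) (nhds (φ t)))
    (hcoer : Filter.Tendsto φ Filter.atTop Filter.atTop) :
    (∃ K : ℝ, 2 ≤ K ∧ ∀ t : ℝ, 0 ≤ t → φ (2 * t) ≤ K * φ t) ↔
      (∃ q : ℝ, 0 < q ∧ ∀ s t : ℝ, 0 < s → s ≤ t → φ t / t ^ q ≤ φ s / s ^ q) := by
  constructor
  · rintro ⟨K, hK, hdbl⟩
    set q : ℝ := K - 1 with hq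
    refine ⟨q, by simp [hq]; linarith, ?_⟩
    have step := step_lemma φ K hK hconv hmono h0 hdbl
    -- key : for all n, all 0 < s ≤ t ≤ 2^n s, φ t ≤ (t/s)^q φ s
    have key : ∀ n : ℕ, ∀ s t : ℝ, 0 < s → s ≤ t → t ≤ 2 ^ n * s →
        φ t ≤ (t / s) ^ q * φ s := by
      intro n
      induction n with
      | zero =>
        intro s t hs hst hts
        have : t = s := le_antisymm (by simpa using hts) hst
        subst this
        rw [div_self hs.ne']
        simp [Real.one_rpow]
      | succ n ih =>
        intro s t hs hst hts
        rcases le_or_gt t (2 ^ n * s) with h | h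
        · exact ih s t hs hst h
        · have hpow : (0:ℝ) < 2 ^ n * s := by positivity
          set u : ℝ := 2 ^ n * s with hu
          have hl1 : 1 ≤ t / u := (one_le_div hpow).mpr h.le
          have hl2 : t / u ≤ 2 := by
            rw [div_le_iff₀ hpow]
            calc t ≤ 2 ^ (n+1) * s := hts
              _ = 2 * (2 ^ n * s) := by ring
          have h1 : φ t ≤ (t / u) ^ q * φ u := by
            have := step u (t / u) hpow hl1 hl2
            rwa [div_mul_cancel₀ _ hpow.ne'] at this
          have h2 : φ u ≤ (u / s) ^ q * φ s := by
            apply ih s u hs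
            · calc s = 1 * s := (one_mul s).symm
                _ ≤ 2 ^ n * s := by
                  apply mul_le_mul_of_nonneg_right _ hs.le
                  exact one_le_pow₀ one_le_two
            · exact le_rfl
          have hnn1 : (0:ℝ) ≤ (t / u) ^ q := Real.rpow_nonneg (by positivity) q
          have hnn2 : (0:ℝ) ≤ (u / s) ^ q := Real.rpow_nonneg (by positivity) q
          calc φ t ≤ (t / u) ^ q * φ u := h1
            _ ≤ (t / u) ^ q * ((u / s) ^ q * φ s) :=
                mul_le_mul_of_nonneg_left h2 hnn1
            _ = ((t / u) * (u / s)) ^ q * φ s := by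
                rw [Real.mul_rpow (by positivity) (by positivity)]; ring
            _ = (t / s) ^ q * φ s := by
                rw [div_mul_div_cancel₀]
                exact hpow.ne'
    intro s t hs hst
    have ht : 0 < t := hs.trans_le hst
    -- find n with t ≤ 2^n s
    obtain ⟨n, hn⟩ : ∃ n : ℕ, t / s < 2 ^ n := pow_unbounded_of_one_lt (t / s) one_lt_two
    have htn : t ≤ 2 ^ n * s := by
      rw [div_lt_iff₀ hs] at hn
      linarith [hn]
    have := key n s t hs hst htn
    rw [div_le_div_iff₀ (Real.rpow_pos_of_pos ht q) (Real.rpow_pos_of_pos hs q)]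
    calc φ t * s ^ q ≤ ((t / s) ^ q * φ s) * s ^ q := by
          apply mul_le_mul_of_nonneg_right this (Real.rpow_nonneg hs.le q)
      _ = φ s * t ^ q := by
          rw [Real.div_rpow ht.le hs.le]
          field_simp
  · rintro ⟨q, hq, hdec⟩
    refine ⟨max 2 (2 ^ q), le_max_left _ _, ?_⟩
    intro t ht
    rcases eq_or_lt_of_le ht with rfl | ht'
    · simp [h0]
    · have h2t : t ≤ 2 * t := by linarith
      have := hdec t (2 * t) ht' h2t
      have hφt : 0 ≤ φ t := h0 ▸ hmono 0 t le_rfl ht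
      have h1 : φ (2 * t) ≤ 2 ^ q * φ t := by
        have h2tpos : (0:ℝ) < (2 * t) ^ q := Real.rpow_pos_of_pos (by linarith) q
        rw [div_le_div_iff₀ h2tpos (Real.rpow_pos_of_pos ht' q),
          Real.mul_rpow (by norm_num) ht] at this
        have htq : (0:ℝ) < t ^ q := Real.rpow_pos_of_pos ht' q
        calc φ (2 * t) = φ (2 * t) * t ^ q / t ^ q := by field_simp
          _ ≤ φ t * (2 ^ q * t ^ q) / t ^ q := by
              apply div_le_div_of_nonneg_right this htq.le |>.trans_eq rfl
          _ = 2 ^ q * φ t := by field_simp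
      calc φ (2 * t) ≤ 2 ^ q * φ t := h1
        _ ≤ max 2 (2 ^ q) * φ t :=
            mul_le_mul_of_nonneg_right (le_max_right _ _) hφt
end

section
/- Let ψ, φ : [0,∞) → [0,∞] be weak Φ-functions. Then φ ≃ ψ if and only if φ⁻¹ ≈ ψ⁻¹. More precisely, if ψ(t/L) ≤ φ(t) ≤ ψ(Lt) for some L ≥ 1 and all t ≥ 0, then ψ⁻¹(t)/L ≤ φ⁻¹(t) ≤ L ψ⁻¹(t) for all t ≥ 0. -/
/-!
If `φ t ≤ ψ (L t)` then every `t` with `s ≤ φ t` yields `L t` with `s ≤ ψ (L t)`, so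
`ψ⁻¹(s) ≤ L φ⁻¹(s)`; the two-sided bound gives the quantitative statement. Conversely, if
`φ⁻¹ ≤ c ψ⁻¹` but `φ (L t) < ψ t` for some `t > 0` and `L > c`, a level `s` strictly between
these values gives `L t ≤ φ⁻¹(s) ≤ c ψ⁻¹(s) ≤ c t`, which is absurd; applied to both
inequalities between the inverses this gives `φ ≃ ψ`.
-/

open scoped NNReal ENNReal

/-- Left inverse `φ⁻¹(s) = inf {t ≥ 0 : φ t ≥ s}` of a `Φ`-function. -/
noncomputable def leftInvE (φ : ℝ → ℝ≥0∞) (s : ℝ≥0∞) : ℝ :=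
  sInf {t : ℝ | 0 ≤ t ∧ s ≤ φ t}

open scoped Topology
open Filter Set

section LeftInverse

variable {φ ψ : ℝ → ℝ≥0∞} {s : ℝ≥0∞} {c L t : ℝ}

lemma leftInvE_le (ht : 0 ≤ t) (h : s ≤ φ t) : leftInvE φ s ≤ t :=
  csInf_le ⟨0, fun _ hx => hx.1⟩ ⟨ht, h⟩

lemma leftInvE_eq_zero (h : ¬{t : ℝ | 0 ≤ t ∧ s ≤ φ t}.Nonempty) : leftInvE φ s = 0 := by
  rw [leftInvE, Set.not_nonempty_iff_eq_empty.1 h, Real.sInf_empty]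

lemma le_leftInvE_of_lt (hφ : MonotoneOn φ (Ici 0)) (hφtop : Tendsto φ atTop (𝓝 ⊤))
    (hs : s < ⊤) (ht : 0 ≤ t) (h : φ t < s) : t ≤ leftInvE φ s := by
  obtain ⟨x, hx, hsx⟩ :=
    ((eventually_ge_atTop 0).and (hφtop.eventually (eventually_gt_nhds hs))).exists
  refine le_csInf ⟨x, hx, hsx.le⟩ fun y ⟨hy, hsy⟩ => le_of_not_gt fun hyt => ?_
  exact (hsy.trans (hφ hy ht hyt.le)).not_gt h

lemma leftInvE_le_mul_leftInvE (hL : 0 < L) (h : ∀ t, 0 ≤ t → φ t ≤ ψ (L * t))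
    (hne : {t : ℝ | 0 ≤ t ∧ s ≤ φ t}.Nonempty) : leftInvE ψ s ≤ L * leftInvE φ s := by
  refine (div_le_iff₀' hL).1 (le_csInf hne fun t ⟨ht, hst⟩ => (div_le_iff₀' hL).2 ?_)
  exact leftInvE_le (mul_nonneg hL.le ht) (hst.trans (h t ht))

lemma leftInvE_div_le_and_le_mul (hL : 0 < L) (hφψ : ∀ t, 0 ≤ t → φ t ≤ ψ (L * t))
    (hψφ : ∀ t, 0 ≤ t → ψ t ≤ φ (L * t)) (s : ℝ≥0∞) :
    leftInvE ψ s / L ≤ leftInvE φ s ∧ leftInvE φ s ≤ L * leftInvE ψ s := by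
  -- `leftInvE` is `0` at levels that are never reached (`sInf ∅ = 0`), so the two level sets
  -- have to be empty together.
  by_cases hne : {t : ℝ | 0 ≤ t ∧ s ≤ φ t}.Nonempty
  · obtain ⟨t, ht, hst⟩ := hne
    have hneψ : {t : ℝ | 0 ≤ t ∧ s ≤ ψ t}.Nonempty :=
      ⟨L * t, mul_nonneg hL.le ht, hst.trans (hφψ t ht)⟩
    exact ⟨(div_le_iff₀' hL).2 (leftInvE_le_mul_leftInvE hL hφψ ⟨t, ht, hst⟩),
      leftInvE_le_mul_leftInvE hL hψφ hneψ⟩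
  · have hneψ : ¬{t : ℝ | 0 ≤ t ∧ s ≤ ψ t}.Nonempty := fun ⟨t, ht, hst⟩ =>
      hne ⟨L * t, mul_nonneg hL.le ht, hst.trans (hψφ t ht)⟩
    simp [leftInvE_eq_zero hne, leftInvE_eq_zero hneψ]

lemma apply_le_apply_mul_of_leftInvE_le_mul (hφ : MonotoneOn φ (Ici 0))
    (hφtop : Tendsto φ atTop (𝓝 ⊤)) (hψ0 : ψ 0 = 0) (hc : 0 ≤ c) (hcL : c < L)
    (h : ∀ s, leftInvE φ s ≤ c * leftInvE ψ s) (ht : 0 ≤ t) : ψ t ≤ φ (L * t) := by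
  rcases ht.eq_or_lt with rfl | ht
  · simp [hψ0]
  by_contra! hlt
  obtain ⟨s, hφs, hsψ⟩ := exists_between hlt
  have hLt : L * t ≤ leftInvE φ s :=
    le_leftInvE_of_lt hφ hφtop (hsψ.trans_le le_top) (mul_pos (hc.trans_lt hcL) ht).le hφs
  have hψs : leftInvE ψ s ≤ t := leftInvE_le ht.le hsψ.le
  have : L * t ≤ c * t := hLt.trans ((h s).trans (mul_le_mul_of_nonneg_left hψs hc))
  exact this.not_gt (mul_lt_mul_of_pos_right hcL ht)

end LeftInverse

theorem stmt_7_general (φ ψ : ℝ → ℝ≥0∞)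
    (hφmono : ∀ s t : ℝ, 0 ≤ s → s ≤ t → φ s ≤ φ t)
    (hψmono : ∀ s t : ℝ, 0 ≤ s → s ≤ t → ψ s ≤ ψ t)
    (hφ0 : φ 0 = 0) (hψ0 : ψ 0 = 0)
    (hφcoer : Filter.Tendsto φ Filter.atTop (nhds ⊤))
    (hψcoer : Filter.Tendsto ψ Filter.atTop (nhds ⊤)) :
    ((∃ L : ℝ, 1 ≤ L ∧ ∀ t : ℝ, 0 ≤ t → ψ (t / L) ≤ φ t ∧ φ t ≤ ψ (L * t)) ↔
      (∃ c₁ c₂ : ℝ, 0 < c₁ ∧ 0 < c₂ ∧ ∀ t : ℝ≥0∞,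
        c₁ * leftInvE ψ t ≤ leftInvE φ t ∧ leftInvE φ t ≤ c₂ * leftInvE ψ t)) ∧
    (∀ L : ℝ, 1 ≤ L → (∀ t : ℝ, 0 ≤ t → ψ (t / L) ≤ φ t ∧ φ t ≤ ψ (L * t)) →
      ∀ t : ℝ≥0∞, leftInvE ψ t / L ≤ leftInvE φ t ∧ leftInvE φ t ≤ L * leftInvE ψ t) := by
  have quantitative (L : ℝ) (hL : 1 ≤ L)
      (h : ∀ t : ℝ, 0 ≤ t → ψ (t / L) ≤ φ t ∧ φ t ≤ ψ (L * t)) :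
      ∀ s, leftInvE ψ s / L ≤ leftInvE φ s ∧ leftInvE φ s ≤ L * leftInvE ψ s := by
    have hL0 : 0 < L := one_pos.trans_le hL
    refine leftInvE_div_le_and_le_mul hL0 (fun t ht => (h t ht).2) fun t ht => ?_
    simpa [mul_div_cancel_left₀ t hL0.ne'] using (h (L * t) (by positivity)).1
  refine ⟨⟨fun ⟨L, hL, h⟩ => ?_, fun ⟨c₁, c₂, hc₁, hc₂, h⟩ => ?_⟩, quantitative⟩
  · refine ⟨L⁻¹, L, by positivity, by positivity, fun s => ?_⟩
    simpa only [div_eq_inv_mul] using quantitative L hL h s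
  · have hψφ (s : ℝ≥0∞) : leftInvE ψ s ≤ c₁⁻¹ * leftInvE φ s :=
      (le_inv_mul_iff₀ hc₁).2 (h s).1
    set L := 1 + c₂ + c₁⁻¹
    have hL0 : 0 < L := by positivity
    refine ⟨L, by linarith [inv_pos.2 hc₁], fun t ht => ⟨?_, ?_⟩⟩
    · simpa [mul_div_cancel₀ t hL0.ne'] using
        apply_le_apply_mul_of_leftInvE_le_mul (fun a ha b _ hab => hφmono a b ha hab) hφcoer
          hψ0 hc₂.le (by linarith [inv_pos.2 hc₁] : c₂ < L) (fun s => (h s).2) (div_nonneg ht hL0.le)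
    · exact apply_le_apply_mul_of_leftInvE_le_mul (fun a ha b _ hab => hψmono a b ha hab)
        hψcoer hφ0 (inv_nonneg.2 hc₁.le) (by linarith : c₁⁻¹ < L) hψφ ht

/-- For weak `Φ`-functions `φ, ψ`: `φ ≃ ψ` if and only if `φ⁻¹ ≈ ψ⁻¹`; more precisely,
if `ψ(t/L) ≤ φ(t) ≤ ψ(Lt)` for some `L ≥ 1`, then `ψ⁻¹(t)/L ≤ φ⁻¹(t) ≤ L ψ⁻¹(t)`. -/
theorem stmt_7 (φ ψ : ℝ → ℝ≥0∞)
    (hφmono : ∀ s t : ℝ, 0 ≤ s → s ≤ t → φ s ≤ φ t)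
    (hψmono : ∀ s t : ℝ, 0 ≤ s → s ≤ t → ψ s ≤ ψ t)
    (hφ0 : φ 0 = 0) (hψ0 : ψ 0 = 0)
    (hφlim0 : Filter.Tendsto φ (nhdsWithin 0 (Set.Ioi 0)) (nhds 0))
    (hψlim0 : Filter.Tendsto ψ (nhdsWithin 0 (Set.Ioi 0)) (nhds 0))
    (hφcoer : Filter.Tendsto φ Filter.atTop (nhds ⊤))
    (hψcoer : Filter.Tendsto ψ Filter.atTop (nhds ⊤))
    (hφaInc : ∃ a : ℝ≥0, 1 ≤ a ∧ ∀ s t : ℝ, 0 < s → s ≤ t →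
      φ s / ENNReal.ofReal s ≤ a * (φ t / ENNReal.ofReal t))
    (hψaInc : ∃ a : ℝ≥0, 1 ≤ a ∧ ∀ s t : ℝ, 0 < s → s ≤ t →
      ψ s / ENNReal.ofReal s ≤ a * (ψ t / ENNReal.ofReal t)) :
    ((∃ L : ℝ, 1 ≤ L ∧ ∀ t : ℝ, 0 ≤ t → ψ (t / L) ≤ φ t ∧ φ t ≤ ψ (L * t)) ↔
      (∃ c₁ c₂ : ℝ, 0 < c₁ ∧ 0 < c₂ ∧ ∀ t : ℝ≥0∞,
        c₁ * leftInvE ψ t ≤ leftInvE φ t ∧ leftInvE φ t ≤ c₂ * leftInvE ψ t)) ∧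
    (∀ L : ℝ, 1 ≤ L → (∀ t : ℝ, 0 ≤ t → ψ (t / L) ≤ φ t ∧ φ t ≤ ψ (L * t)) →
      ∀ t : ℝ≥0∞, leftInvE ψ t / L ≤ leftInvE φ t ∧ leftInvE φ t ≤ L * leftInvE ψ t) :=
  stmt_7_general φ ψ hφmono hψmono hφ0 hψ0 hφcoer hψcoer
end
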